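/- arXiv:1111.5924 — 3 statements merged into one kernel-verified Lean document; each statement's English description precedes it below -/
import Mathlib

section
/- Let M be a finitely generated free abelian group and let s, s' ∈ M. Suppose there are infinitely many primes p such that there exists an integer k with 1 ≤ k < p and s + k·s' ∈ pM. Then s and s' are linearly dependent over ℤ, i.e., there exist integers l, l', not both zero, with l·s + l'·s' = 0. -/
/-- If for infinitely many primes p there is k with 1 ≤ k < p and s + k·s' ∈ pM,
then s and s' are linearly dependent over ℤ. -/
theorem stmt_4 (M : Type*) [AddCommGroup M] [Module.Free ℤ M] [Module.Finite ℤ M]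
    (s s' : M)
    (h : {p : ℕ | p.Prime ∧ ∃ k : ℕ, 1 ≤ k ∧ k < p ∧
        ∃ m : M, s + (k : ℤ) • s' = (p : ℤ) • m}.Infinite) :
    ∃ l l' : ℤ, (l ≠ 0 ∨ l' ≠ 0) ∧ l • s + l' • s' = 0 := by
  classical
  by_cases hs' : s' = 0
  · exact ⟨0, 1, Or.inr one_ne_zero, by simp [hs']⟩
  set b := Module.Free.chooseBasis ℤ M
  have hne : b.repr s' ≠ 0 := fun hz => hs' (by
    have : b.repr s' = b.repr 0 := by simpa using hz
    exact b.repr.injective this)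
  obtain ⟨i, hi⟩ : ∃ i, b.repr s' i ≠ 0 := by
    by_contra hc
    push_neg at hc
    exact hne (Finsupp.ext hc)
  have key : ∀ j, b.repr s' i * b.repr s j - b.repr s' j * b.repr s i = 0 := by
    intro j
    set d : ℤ := b.repr s' i * b.repr s j - b.repr s' j * b.repr s i with hd
    obtain ⟨p, hp, hgt⟩ := h.exists_gt d.natAbs
    obtain ⟨hpp, k, hk1, hkp, m, hm⟩ := hp
    have coord : ∀ t, b.repr s t + (k : ℤ) * b.repr s' t = (p : ℤ) * b.repr m t := by
      intro t
      have := congrArg (fun x => b.repr x t) hm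
      simpa [map_add, map_zsmul, smul_eq_mul] using this
    have hdvd : (p : ℤ) ∣ d := by
      refine ⟨b.repr s' i * b.repr m j - b.repr s' j * b.repr m i, ?_⟩
      have hi' := coord i
      have hj' := coord j
      have : d = b.repr s' i * (b.repr s j + (k : ℤ) * b.repr s' j)
          - b.repr s' j * (b.repr s i + (k : ℤ) * b.repr s' i) := by rw [hd]; ring
      rw [this, hi', hj']
      ring
    have habs : |d| < (p : ℤ) := by
      rw [Int.abs_eq_natAbs]
      exact_mod_cast hgt
    exact Int.eq_zero_of_abs_lt_dvd hdvd habs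
  refine ⟨b.repr s' i, -(b.repr s i), Or.inl hi, ?_⟩
  apply b.repr.injective
  ext j
  have := key j
  simp only [map_add, map_zsmul, map_neg, Finsupp.add_apply, Finsupp.smul_apply,
    Finsupp.neg_apply, smul_eq_mul, map_zero, Finsupp.coe_zero, Pi.zero_apply]
  linarith [key j]
end

section
/- Let K = ℂ(t) and let E be the elliptic curve over K defined by y² = (x − t² + 2)(x² − 2x + t² − 4). Then the point Q = (3t − 4, i√10·(t − 1)(t − 2)) lies on E (where i√10 is a fixed square root of −10 in ℂ), and 2Q = ( (1/10)t² − 2, −(3/100)·i√10·t·(t² + 20) ) in the group E(K). -/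
open WeierstrassCurve.Affine

lemma some_congr' {F : Type*} [Field F] {W : WeierstrassCurve.Affine F}
    {x y x' y' : F} (h : W.Nonsingular x y) (h' : W.Nonsingular x' y')
    (hx : x = x') (hy : y = y') : Point.some _ _ h = Point.some _ _ h' := by
  subst hx; subst hy; rfl

open Classical in
/-- On the elliptic curve y² = (x − t² + 2)(x² − 2x + t² − 4) over ℂ(t), the point
Q = (3t − 4, i√10·(t − 1)(t − 2)) lies on the curve (i√10 a square root of −10) and
2Q = ((1/10)t² − 2, −(3/100)·i√10·t·(t² + 20)). -/
theorem stmt_11 (r : ℂ) (hr : r ^ 2 = -10) :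
    let t : RatFunc ℂ := RatFunc.X
    let s : RatFunc ℂ := algebraMap ℂ (RatFunc ℂ) r
    let W : WeierstrassCurve.Affine (RatFunc ℂ) :=
      { a₁ := 0, a₂ := -t ^ 2, a₃ := 0, a₄ := 3 * t ^ 2 - 8,
        a₆ := -t ^ 4 + 6 * t ^ 2 - 8 }
    ∃ (hP : W.Nonsingular (3 * t - 4) (s * (t - 1) * (t - 2)))
      (hQ : W.Nonsingular (1 / 10 * t ^ 2 - 2) (-(3 / 100) * s * t * (t ^ 2 + 20))),
      (2 : ℤ) • WeierstrassCurve.Affine.Point.some _ _ hP =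
        WeierstrassCurve.Affine.Point.some _ _ hQ := by
  intro t s W
  haveI : CharZero (RatFunc ℂ) :=
    charZero_of_injective_algebraMap (algebraMap ℂ (RatFunc ℂ)).injective
  have hs : s ^ 2 = -10 := by
    have : s ^ 2 = algebraMap ℂ (RatFunc ℂ) (r ^ 2) := (map_pow _ _ _).symm
    rw [this, hr, map_neg, map_ofNat]
  have hs0 : s ≠ 0 := by
    intro h
    rw [h] at hs
    norm_num at hs
  have ht : ∀ c : ℂ, t - algebraMap ℂ (RatFunc ℂ) c ≠ 0 := by
    intro c
    have h1 : t - algebraMap ℂ (RatFunc ℂ) c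
        = algebraMap (Polynomial ℂ) (RatFunc ℂ) (Polynomial.X - Polynomial.C c) := by
      rw [map_sub, RatFunc.algebraMap_X, RatFunc.algebraMap_C, RatFunc.algebraMap_eq_C]
    rw [h1]
    exact RatFunc.algebraMap_ne_zero (Polynomial.X_sub_C_ne_zero c)
  have ht1 : t - 1 ≠ 0 := by have := ht 1; rwa [map_one] at this
  have ht2 : t - 2 ≠ 0 := by have := ht 2; rwa [map_ofNat] at this
  have ht0 : t ≠ 0 := RatFunc.X_ne_zero
  have ht20 : t ^ 2 + 20 ≠ 0 := by
    have h1 : t ^ 2 + 20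
        = algebraMap (Polynomial ℂ) (RatFunc ℂ) (Polynomial.X ^ 2 + Polynomial.C 20) := by
      rw [map_add, map_pow, RatFunc.algebraMap_X, RatFunc.algebraMap_C, map_ofNat]
    rw [h1]
    exact RatFunc.algebraMap_ne_zero (Polynomial.X_pow_add_C_ne_zero (by norm_num) 20)
  have hyP : s * (t - 1) * (t - 2) ≠ 0 := mul_ne_zero (mul_ne_zero hs0 ht1) ht2
  have hyQ : -(3 / 100) * s * t * (t ^ 2 + 20) ≠ 0 :=
    mul_ne_zero (mul_ne_zero (mul_ne_zero (by norm_num) hs0) ht0) ht20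
  have hP : W.Nonsingular (3 * t - 4) (s * (t - 1) * (t - 2)) := by
    rw [nonsingular_iff]
    constructor
    · rw [equation_iff]
      simp only [W]
      linear_combination (t - 1) ^ 2 * (t - 2) ^ 2 * hs
    · right
      simp only [W, negY]
      intro h
      exact hyP (by linear_combination h / 2)
  have hQ : W.Nonsingular (1 / 10 * t ^ 2 - 2) (-(3 / 100) * s * t * (t ^ 2 + 20)) := by
    rw [nonsingular_iff]
    constructor
    · rw [equation_iff]
      simp only [W]
      linear_combination (9 / 10000 * t ^ 2 * (t ^ 2 + 20) ^ 2) * hs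
    · right
      simp only [W, negY]
      intro h
      exact hyQ (by linear_combination h / 2)
  refine ⟨hP, hQ, ?_⟩
  have hy : s * (t - 1) * (t - 2) ≠ W.negY (3 * t - 4) (s * (t - 1) * (t - 2)) := by
    simp only [W, negY]
    intro h
    exact hyP (by linear_combination h / 2)
  have hslope : W.slope (3 * t - 4) (3 * t - 4) (s * (t - 1) * (t - 2)) (s * (t - 1) * (t - 2))
      = (10 - 3 * t) / s := by
    rw [slope_of_Y_ne rfl hy]
    simp only [W, negY]
    field_simp
    ring_nf
  rw [two_zsmul, Point.add_self_of_Y_ne hy]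
  apply some_congr'
  · simp only [addX, hslope, W]
    field_simp
    linear_combination (9 * t ^ 2 - 60 * t + 100) * hs
  · simp only [addY, negAddY, addX, negY, hslope, W]
    field_simp
    linear_combination ((3 * t ^ 3 - 100 * t ^ 2 + 360 * t - 200) * s ^ 2 + 270 * t ^ 3 - 2700 * t ^ 2 + 9000 * t - 10000) * hs
end

section
/- Let K = ℂ(t) and let E be the elliptic curve over K defined by y² = (x − t² + 2)(x² − 2x + t² − 4). Then the point R = (−1, i·(t − 1)(t + 1)) lies on E (where i is a fixed square root of −1 in ℂ), and 2R = ( t² − 17/4, (3/8)·i·(4t² − 19) ) in the group E(K). -/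
instance : CharZero (RatFunc ℂ) := charZero_of_injective_algebraMap (algebraMap ℂ _).injective

open Classical in
/-- On the elliptic curve y² = (x − t² + 2)(x² − 2x + t² − 4) over ℂ(t), the point
R = (−1, i·(t − 1)(t + 1)) lies on the curve (i a square root of −1) and
2R = (t² − 17/4, (3/8)·i·(4t² − 19)). -/
theorem stmt_12 (r : ℂ) (hr : r ^ 2 = -1) :
    let t : RatFunc ℂ := RatFunc.X
    let s : RatFunc ℂ := algebraMap ℂ (RatFunc ℂ) r
    let W : WeierstrassCurve.Affine (RatFunc ℂ) :=
      { a₁ := 0, a₂ := -t ^ 2, a₃ := 0, a₄ := 3 * t ^ 2 - 8,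
        a₆ := -t ^ 4 + 6 * t ^ 2 - 8 }
    ∃ (hP : W.Nonsingular (-1) (s * (t - 1) * (t + 1)))
      (hQ : W.Nonsingular (t ^ 2 - 17 / 4) (3 / 8 * s * (4 * t ^ 2 - 19))),
      (2 : ℤ) • WeierstrassCurve.Affine.Point.some _ _ hP =
        WeierstrassCurve.Affine.Point.some _ _ hQ := by
  intro t s W
  have hs2 : s ^ 2 = -1 := by
    simp only [s, ← map_pow, hr, map_neg, map_one]
  have hs0 : s ≠ 0 := by
    intro h
    rw [h] at hs2
    simp at hs2
  have hpoly : ∀ p : Polynomial ℂ, p ≠ 0 → algebraMap (Polynomial ℂ) (RatFunc ℂ) p ≠ 0 :=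
    fun p hp => RatFunc.algebraMap_ne_zero hp
  have ht1 : t - 1 ≠ 0 := by
    have : t - 1 = algebraMap (Polynomial ℂ) (RatFunc ℂ) (Polynomial.X - 1) := by
      simp [t, RatFunc.algebraMap_X, map_sub, map_one]
    rw [this]
    exact hpoly _ (by
      intro h
      have := congrArg (Polynomial.eval 2) h
      simp at this
      norm_num at this)
  have ht2 : t + 1 ≠ 0 := by
    have : t + 1 = algebraMap (Polynomial ℂ) (RatFunc ℂ) (Polynomial.X + 1) := by
      simp [t, RatFunc.algebraMap_X, map_add, map_one]
    rw [this]
    exact hpoly _ (by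
      intro h
      have := congrArg (Polynomial.eval 2) h
      simp at this
      norm_num at this)
  have hyP0 : s * (t - 1) * (t + 1) ≠ 0 := mul_ne_zero (mul_ne_zero hs0 ht1) ht2
  have hch : (2 : RatFunc ℂ) ≠ 0 := by norm_num
  have hneg : W.negY (-1) (s * (t - 1) * (t + 1)) = -(s * (t - 1) * (t + 1)) := by
    simp [WeierstrassCurve.Affine.negY, W]
  have hyne : s * (t - 1) * (t + 1) ≠ W.negY (-1) (s * (t - 1) * (t + 1)) := by
    rw [hneg]
    intro h
    apply hyP0
    have h2 : (2 : RatFunc ℂ) * (s * (t - 1) * (t + 1)) = 0 := by linear_combination h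
    exact (mul_eq_zero.mp h2).resolve_left hch
  have hP : W.Nonsingular (-1) (s * (t - 1) * (t + 1)) := by
    rw [WeierstrassCurve.Affine.nonsingular_iff]
    constructor
    · rw [WeierstrassCurve.Affine.equation_iff]
      simp only [W]
      linear_combination (t - 1) ^ 2 * (t + 1) ^ 2 * hs2
    · right
      rwa [← WeierstrassCurve.Affine.negY]
  have hQ : W.Nonsingular (t ^ 2 - 17 / 4) (3 / 8 * s * (4 * t ^ 2 - 19)) := by
    rw [WeierstrassCurve.Affine.nonsingular_iff]
    constructor
    · rw [WeierstrassCurve.Affine.equation_iff]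
      simp only [W]
      linear_combination (9 / 64 * (4 * t ^ 2 - 19) ^ 2) * hs2
    · right
      simp only [WeierstrassCurve.Affine.negY, W]
      intro h
      have h2 : (2 : RatFunc ℂ) * (3 / 8 * s * (4 * t ^ 2 - 19)) = 0 := by linear_combination h
      have h3 : 3 / 8 * s * (4 * t ^ 2 - 19) = 0 := (mul_eq_zero.mp h2).resolve_left hch
      have h4 : (4 * t ^ 2 - 19 : RatFunc ℂ) ≠ 0 := by
        have : (4 * t ^ 2 - 19 : RatFunc ℂ)
            = algebraMap (Polynomial ℂ) (RatFunc ℂ) (4 * Polynomial.X ^ 2 - 19) := by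
          simp [t, RatFunc.algebraMap_X, map_ofNat]
        rw [this]
        exact hpoly _ (by
          intro hh
          have := congrArg (Polynomial.eval 0) hh
          simp at this)
      have h5 : (3 / 8 : RatFunc ℂ) * s ≠ 0 := mul_ne_zero (by norm_num) hs0
      exact mul_ne_zero h5 h4 h3
  refine ⟨hP, hQ, ?_⟩
  rw [two_zsmul, WeierstrassCurve.Affine.Point.add_self_of_Y_ne hyne]
  have hslope : W.slope (-1) (-1) (s * (t - 1) * (t + 1)) (s * (t - 1) * (t + 1))
      = -5 / 2 * s := by
    rw [WeierstrassCurve.Affine.slope_of_Y_ne rfl hyne, hneg]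
    simp only [W]
    rw [div_eq_iff (by rw [← hneg]; exact sub_ne_zero.mpr hyne)]
    linear_combination (5 * (t - 1) * (t + 1)) * hs2
  have hx : W.addX (-1) (-1) (W.slope (-1) (-1) (s * (t - 1) * (t + 1)) (s * (t - 1) * (t + 1)))
      = t ^ 2 - 17 / 4 := by
    rw [hslope]
    simp only [WeierstrassCurve.Affine.addX, W]
    linear_combination (25 / 4 : RatFunc ℂ) * hs2
  have hy : W.addY (-1) (-1) (s * (t - 1) * (t + 1))
      (W.slope (-1) (-1) (s * (t - 1) * (t + 1)) (s * (t - 1) * (t + 1)))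
      = 3 / 8 * s * (4 * t ^ 2 - 19) := by
    rw [hslope]
    simp only [WeierstrassCurve.Affine.addY, WeierstrassCurve.Affine.negAddY,
      WeierstrassCurve.Affine.addX, WeierstrassCurve.Affine.negY, W]
    linear_combination (125 / 8 * s) * hs2
  have key : ∀ (x y : RatFunc ℂ) (h : W.Nonsingular x y),
      x = t ^ 2 - 17 / 4 → y = 3 / 8 * s * (4 * t ^ 2 - 19) →
      WeierstrassCurve.Affine.Point.some _ _ h = WeierstrassCurve.Affine.Point.some _ _ hQ := by
    rintro x y h rfl rfl
    rfl
  exact key _ _ _ hx hy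
end
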